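/- arXiv:2109.06016 — 7 statements merged into one kernel-verified Lean document; each statement's English description precedes it below -/
import Mathlib

section
/- With the demand sets D_k of the location-based coded caching problem, if k₁, k₂ ∈ {1,…,K} satisfy ⟨k₁ − k₂⟩_K ∈ {2,…,K−2}, then D_{k₁} ∩ D_{k₂} = ∅; that is, only neighbouring regions on the cycle can share demandable files. -/
/-- `⟨x⟩_m`: residue of `x` modulo `m` with representative in `{1,…,m}`. -/
def mod1 (m x : ℕ) : ℕ := (x - 1) % m + 1

def Dk1 (a b k : ℕ) : Finset ℕ := Finset.Icc ((k - 1) * (a + b) + 1) (k * a + (k - 1) * b)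

def Dk2 (a b k : ℕ) : Finset ℕ := Finset.Icc (k * a + (k - 1) * b + 1) (k * (a + b))

def Dk3 (K a b k : ℕ) : Finset ℕ :=
  Finset.Icc (mod1 (K * (a + b)) (k * (a + b) + 1)) (mod1 (K * (a + b)) ((k + 1) * a + k * b))

def Dem (K a b k : ℕ) : Finset ℕ := Dk1 a b k ∪ Dk2 a b k ∪ Dk3 K a b k

/-- Every element of `D_k` lies in the block of region `k` together with the first `a`
positions of the next block; for `k = K` the overflow wraps to `{1,…,a}`. -/
lemma mem_Dem_bound (K a b k x : ℕ) (hK : 4 ≤ K) (ha : 1 ≤ a) (hk : 1 ≤ k) (hkK : k ≤ K)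
    (hx : x ∈ Dem K a b k) :
    ((k - 1) * (a + b) + 1 ≤ x ∧ x ≤ k * (a + b) + a) ∨ (k = K ∧ 1 ≤ x ∧ x ≤ a) := by
  obtain ⟨n, rfl⟩ : ∃ n, k = n + 1 := ⟨k - 1, by omega⟩
  have hsum : (n + 1 + 1) * a + (n + 1) * b = (n + 1) * (a + b) + a := by ring
  simp only [Dem, Dk1, Dk2, Dk3, mod1, Finset.mem_union, Finset.mem_Icc, hsum,
    Nat.add_sub_cancel] at hx ⊢
  have E1 : (n + 1) * a + n * b + b = (n + 1) * (a + b) := by ring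
  have E2 : n * (a + b) + (a + b) = (n + 1) * (a + b) := by ring
  rcases eq_or_lt_of_le hkK with heq | hlt
  · subst heq
    have h1 : (n + 1) * (a + b) % ((n + 1) * (a + b)) = 0 := Nat.mod_self _
    have h2 : ((n + 1) * (a + b) + a - 1) % ((n + 1) * (a + b)) = a - 1 := by
      have e : (n + 1) * (a + b) + a - 1 = (n + 1) * (a + b) + (a - 1) := by omega
      rw [e, Nat.add_mod_left]
      exact Nat.mod_eq_of_lt (by omega)
    rw [h1, h2] at hx
    rcases hx with (h | h) | h
    · left; omega
    · left; omega
    · right; omega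
  · have hk1 : (n + 1 + 1) * (a + b) ≤ K * (a + b) := Nat.mul_le_mul_right _ (by omega)
    have E3 : (n + 1 + 1) * (a + b) = (n + 1) * (a + b) + (a + b) := by ring
    have h1 : (n + 1) * (a + b) % (K * (a + b)) = (n + 1) * (a + b) :=
      Nat.mod_eq_of_lt (by omega)
    have h2 : ((n + 1) * (a + b) + a - 1) % (K * (a + b)) = (n + 1) * (a + b) + a - 1 :=
      Nat.mod_eq_of_lt (by omega)
    rw [h1, h2] at hx
    left
    rcases hx with (h | h) | h <;> omega

/-- The asymmetric form of the disjointness statement, assuming `k₂ + 2 ≤ k₁ ≤ k₂ + K - 2`. -/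
lemma disj_aux (K a b k₁ k₂ : ℕ) (hK : 4 ≤ K) (ha : 1 ≤ a)
    (hk₁ : 1 ≤ k₁) (hk₁K : k₁ ≤ K) (hk₂ : 1 ≤ k₂) (hk₂K : k₂ ≤ K)
    (h2 : k₂ + 2 ≤ k₁) (h2' : k₁ + 2 ≤ k₂ + K) :
    Disjoint (Dem K a b k₁) (Dem K a b k₂) := by
  rw [Finset.disjoint_left]
  intro x hx1 hx2
  have H1 := mem_Dem_bound K a b k₁ x hK ha hk₁ hk₁K hx1
  have H2 := mem_Dem_bound K a b k₂ x hK ha hk₂ hk₂K hx2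
  obtain ⟨n₁, rfl⟩ : ∃ n, k₁ = n + 1 := ⟨k₁ - 1, by omega⟩
  obtain ⟨n₂, rfl⟩ : ∃ n, k₂ = n + 1 := ⟨k₂ - 1, by omega⟩
  simp only [Nat.add_sub_cancel] at H1 H2
  rcases H1 with ⟨hl1, hu1⟩ | ⟨hKeq1, _, hu1⟩
  · rcases H2 with ⟨hl2, hu2⟩ | ⟨hKeq2, _, _⟩
    · have hm : (n₂ + 2) * (a + b) ≤ n₁ * (a + b) := Nat.mul_le_mul_right _ (by omega)
      have e : (n₂ + 2) * (a + b) = (n₂ + 1) * (a + b) + (a + b) := by ring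
      omega
    · omega
  · rcases H2 with ⟨hl2, hu2⟩ | ⟨hKeq2, _, _⟩
    · have hm : 1 * (a + b) ≤ n₂ * (a + b) := Nat.mul_le_mul_right _ (by omega)
      omega
    · omega

/-- Only neighbouring regions on the cycle can share demandable files: if the cyclic
distance `⟨k₁ − k₂⟩_K` lies in `{2,…,K−2}`, then `D_{k₁} ∩ D_{k₂} = ∅`. -/
theorem stmt_3 (K a b : ℕ) (hK : 4 ≤ K) (ha : 1 ≤ a)
    (k₁ k₂ : ℕ) (hk₁ : 1 ≤ k₁) (hk₁K : k₁ ≤ K) (hk₂ : 1 ≤ k₂) (hk₂K : k₂ ≤ K)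
    (hlo : 2 ≤ ((k₁ : ℤ) - (k₂ : ℤ)) % (K : ℤ))
    (hhi : ((k₁ : ℤ) - (k₂ : ℤ)) % (K : ℤ) ≤ (K : ℤ) - 2) :
    Disjoint (Dem K a b k₁) (Dem K a b k₂) := by
  rcases le_or_gt k₂ k₁ with h | h
  · have hmod : ((k₁ : ℤ) - (k₂ : ℤ)) % (K : ℤ) = (k₁ : ℤ) - k₂ :=
      Int.emod_eq_of_lt (by omega) (by omega)
    rw [hmod] at hlo hhi
    exact disj_aux K a b k₁ k₂ hK ha hk₁ hk₁K hk₂ hk₂K (by omega) (by omega)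
  · have key : ((k₁ : ℤ) - k₂ + K) % K = ((k₁ : ℤ) - k₂) % K := by
      rw [show ((k₁ : ℤ) - k₂ + K) = ((k₁ : ℤ) - k₂ + K * 1) by ring,
        Int.add_mul_emod_self_left]
    have hmod : ((k₁ : ℤ) - (k₂ : ℤ)) % (K : ℤ) = (k₁ : ℤ) - k₂ + K := by
      rw [← key]; exact Int.emod_eq_of_lt (by omega) (by omega)
    rw [hmod] at hlo hhi
    exact (disj_aux K a b k₂ k₁ hK ha hk₂ hk₂K hk₁ hk₁K (by omega) (by omega)).symm
end

section
/- Let K ≥ 2 be an integer and a, b, M be nonnegative reals with a > 0, b·(K−1) < 2a, and 0 ≤ M ≤ a+b. Then K − (K+1)·M/(2(a+b)) ≤ 2·(K/2 − K·M/(2(2a+b))), i.e., the achievable load K − (K+1)M/(2(a+b)) is at most twice the cut-set lower bound K/2 − KM/(2(2a+b)). -/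
lemma mul_div_two_mul_add_le_add_one_mul_div {K a b M : ℝ} (ha : 0 < a) (hb : 0 ≤ b)
    (hM : 0 ≤ M) (hreg : b * (K - 1) ≤ 2 * a) :
    K * M / (2 * a + b) ≤ (K + 1) * M / (2 * (a + b)) := by
  rw [div_le_div_iff₀ (by positivity) (by positivity)]
  have cross_diff : (K + 1) * M * (2 * a + b) - K * M * (2 * (a + b)) = M * (2 * a - b * (K - 1)) := by
    ring
  linarith [mul_nonneg hM (sub_nonneg.2 hreg)]

theorem stmt_6_general (K : ℕ) (a b M : ℝ) (ha : 0 < a) (hb : 0 ≤ b) (hM : 0 ≤ M)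
    (hreg : b * ((K : ℝ) - 1) < 2 * a) :
    (K : ℝ) - ((K : ℝ) + 1) * M / (2 * (a + b)) ≤
      2 * ((K : ℝ) / 2 - (K : ℝ) * M / (2 * (2 * a + b))) := by
  calc (K : ℝ) - ((K : ℝ) + 1) * M / (2 * (a + b))
      ≤ K - K * M / (2 * a + b) := by
        linarith [mul_div_two_mul_add_le_add_one_mul_div ha hb hM hreg.le]
    _ = 2 * ((K : ℝ) / 2 - (K : ℝ) * M / (2 * (2 * a + b))) := by
        field_simp

/-- For even-`K` order optimality: the achievable load `K − (K+1)M/(2(a+b))` is at most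
twice the cut-set lower bound `K/2 − KM/(2(2a+b))`. -/
theorem stmt_6 (K : ℕ) (hK : 2 ≤ K) (a b M : ℝ) (ha : 0 < a) (hb : 0 ≤ b) (hM : 0 ≤ M)
    (hreg : b * ((K : ℝ) - 1) < 2 * a) (hMub : M ≤ a + b) :
    (K : ℝ) - ((K : ℝ) + 1) * M / (2 * (a + b)) ≤
      2 * ((K : ℝ) / 2 - (K : ℝ) * M / (2 * (2 * a + b))) :=
  stmt_6_general K a b M ha hb hM hreg
end

section
/- Let K ≥ 2 be an integer and a, b, M be nonnegative reals with a > 0, b·(K−1) < 2a, and a+b ≤ M ≤ 2a+b. Then (K−1)(2a+b)/(2a) − (K−1)·M/(2a) ≤ 2·(K/2 − K·M/(2(2a+b))). -/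
/-!
Both sides are affine in `M` and vanish at `M = 2a + b`, so it suffices to compare their slopes:
`(K - 1) / (2a) ≤ K / (2a + b)` is exactly the regime condition `b (K - 1) ≤ 2a`.
-/

theorem sub_one_div_le_div_add_of_mul_sub_one_le {K a b : ℝ} (ha : 0 < a) (hb : 0 ≤ b)
    (h : b * (K - 1) ≤ a) : (K - 1) / a ≤ K / (a + b) := by
  rw [div_le_div_iff₀ ha (by linarith)]
  linarith

theorem stmt_7_general (K : ℕ) (a b M : ℝ) (ha : 0 < a) (hb : 0 ≤ b)
    (hreg : b * ((K : ℝ) - 1) < 2 * a) (hMub : M ≤ 2 * a + b) :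
    ((K : ℝ) - 1) * (2 * a + b) / (2 * a) - ((K : ℝ) - 1) * M / (2 * a) ≤
      2 * ((K : ℝ) / 2 - (K : ℝ) * M / (2 * (2 * a + b))) := by
  have hD : 0 < 2 * a + b := by positivity
  calc ((K : ℝ) - 1) * (2 * a + b) / (2 * a) - ((K : ℝ) - 1) * M / (2 * a)
      = ((K : ℝ) - 1) / (2 * a) * (2 * a + b - M) := by ring
    _ ≤ (K : ℝ) / (2 * a + b) * (2 * a + b - M) :=
        mul_le_mul_of_nonneg_right
          (sub_one_div_le_div_add_of_mul_sub_one_le (by positivity) hb hreg.le)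
          (sub_nonneg.2 hMub)
    _ = 2 * ((K : ℝ) / 2 - (K : ℝ) * M / (2 * (2 * a + b))) := by field_simp

/-- For even-`K` order optimality, second memory regime: the achievable load
`(K−1)(2a+b)/(2a) − (K−1)M/(2a)` is at most twice the cut-set bound. -/
theorem stmt_7 (K : ℕ) (hK : 2 ≤ K) (a b M : ℝ) (ha : 0 < a) (hb : 0 ≤ b) (hM : 0 ≤ M)
    (hreg : b * ((K : ℝ) - 1) < 2 * a) (hMlb : a + b ≤ M) (hMub : M ≤ 2 * a + b) :
    ((K : ℝ) - 1) * (2 * a + b) / (2 * a) - ((K : ℝ) - 1) * M / (2 * a) ≤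
      2 * ((K : ℝ) / 2 - (K : ℝ) * M / (2 * (2 * a + b))) :=
  stmt_7_general K a b M ha hb hreg hMub
end

section
/- Let K ≥ 3 be an odd integer and a, b, M nonnegative reals with a > 0, b·(K−1) < 2a, and 0 ≤ M ≤ a+b. Then K − (K+1)·M/(2(a+b)) ≤ 3·((K−1)/2 − (K−1)·M/(2(2a+b))). -/
/-- Odd-`K` order optimality, small-memory regime: the achievable load
`K − (K+1)M/(2(a+b))` is at most `3` times the cut-set bound
`(K−1)/2 − (K−1)M/(2(2a+b))`. -/
theorem stmt_10 (K : ℕ) (hK : 3 ≤ K) (hodd : Odd K) (a b M : ℝ) (ha : 0 < a) (hb : 0 ≤ b)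
    (hM : 0 ≤ M) (hreg : b * ((K : ℝ) - 1) < 2 * a) (hMub : M ≤ a + b) :
    (K : ℝ) - ((K : ℝ) + 1) * M / (2 * (a + b)) ≤
      3 * (((K : ℝ) - 1) / 2 - ((K : ℝ) - 1) * M / (2 * (2 * a + b))) := by
  have hK3 : (3 : ℝ) ≤ (K : ℝ) := by exact_mod_cast hK
  have hab : (0 : ℝ) < a + b := by linarith
  have h2ab : (0 : ℝ) < 2 * a + b := by linarith
  have hba : b ≤ a := by nlinarith
  rw [← sub_nonneg]
  have key : 3 * (((K : ℝ) - 1) / 2 - ((K : ℝ) - 1) * M / (2 * (2 * a + b))) -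
      ((K : ℝ) - ((K : ℝ) + 1) * M / (2 * (a + b))) =
      (((K : ℝ) - 3) * (2 * a + b) * (a + b - M) + M * ((K : ℝ) - 1) * (a - b)) /
        (2 * (a + b) * (2 * a + b)) := by
    field_simp
    ring
  rw [key]
  apply div_nonneg _ (by positivity)
  have h1 : (0:ℝ) ≤ ((K : ℝ) - 3) * (2 * a + b) * (a + b - M) :=
    mul_nonneg (mul_nonneg (by linarith) h2ab.le) (by linarith)
  have h2 : (0:ℝ) ≤ M * ((K : ℝ) - 1) * (a - b) :=
    mul_nonneg (mul_nonneg hM (by linarith)) (by linarith)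
  linarith
end

section
/- Let K ≥ 3 be an odd integer and a, b, M nonnegative reals with a > 0, b·(K−1) < 2a, and a+b ≤ M ≤ 2a+b. Then (K−1)(2a+b)/(2a) − (K−1)·M/(2a) ≤ 3·((K−1)/2 − (K−1)·M/(2(2a+b))). -/
/-! Write `c = K - 1`, `D = 2a + b` and `x = D - M ≥ 0`. The achievable load is `c x / (2a)` and
the cut-set bound is `c x / (2D)`, so the claim reduces to `D ≤ 3a`, i.e. `b ≤ a`; this follows
from `b c < 2a` because `c ≥ 2`. -/

lemma lt_of_mul_lt_two_mul {a b c : ℝ} (hb : 0 ≤ b) (hc : 2 ≤ c) (h : b * c < 2 * a) : b < a := by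
  nlinarith

lemma mul_div_sub_mul_div (c D M a : ℝ) :
    c * D / (2 * a) - c * M / (2 * a) = c * (D - M) / (2 * a) := by
  ring

lemma div_two_sub_mul_div {D : ℝ} (hD : D ≠ 0) (c M : ℝ) :
    c / 2 - c * M / (2 * D) = c * (D - M) / (2 * D) := by
  field_simp

lemma div_two_mul_le_three_mul_div {t a D : ℝ} (ht : 0 ≤ t) (hD : 0 < D) (hDa : D ≤ 3 * a) :
    t / (2 * a) ≤ 3 * (t / (2 * D)) := by
  calc t / (2 * a) = 3 * t / (3 * (2 * a)) := (mul_div_mul_left t _ three_ne_zero).symm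
    _ ≤ 3 * t / (2 * D) := div_le_div_of_nonneg_left (by positivity) (by positivity) (by linarith)
    _ = 3 * (t / (2 * D)) := mul_div_assoc _ _ _

theorem stmt_11_general (K : ℕ) (hK : 3 ≤ K) (a b M : ℝ) (ha : 0 < a) (hb : 0 ≤ b)
    (hreg : b * ((K : ℝ) - 1) < 2 * a) (hMub : M ≤ 2 * a + b) :
    ((K : ℝ) - 1) * (2 * a + b) / (2 * a) - ((K : ℝ) - 1) * M / (2 * a) ≤
      3 * (((K : ℝ) - 1) / 2 - ((K : ℝ) - 1) * M / (2 * (2 * a + b))) := by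
  have hc : (2 : ℝ) ≤ (K : ℝ) - 1 := by
    have : (3 : ℝ) ≤ K := by exact_mod_cast hK
    linarith
  have hba : b < a := lt_of_mul_lt_two_mul hb hc hreg
  have hD : 0 < 2 * a + b := by linarith
  rw [mul_div_sub_mul_div, div_two_sub_mul_div hD.ne']
  exact div_two_mul_le_three_mul_div (mul_nonneg (by linarith) (by linarith)) hD (by linarith)

/-- Odd-`K` order optimality, second memory regime: the achievable load
`(K−1)(2a+b)/(2a) − (K−1)M/(2a)` is at most `3` times the cut-set bound. -/
theorem stmt_11 (K : ℕ) (hK : 3 ≤ K) (hodd : Odd K) (a b M : ℝ) (ha : 0 < a) (hb : 0 ≤ b)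
    (hM : 0 ≤ M) (hreg : b * ((K : ℝ) - 1) < 2 * a) (hMlb : a + b ≤ M) (hMub : M ≤ 2 * a + b) :
    ((K : ℝ) - 1) * (2 * a + b) / (2 * a) - ((K : ℝ) - 1) * M / (2 * a) ≤
      3 * (((K : ℝ) - 1) / 2 - ((K : ℝ) - 1) * M / (2 * (2 * a + b))) :=
  stmt_11_general K hK a b M ha hb hreg hMub
end

section
/- Let K ≥ 2, a > 0, b ≥ 0, M ≥ 0 be reals, and let α₀, β₀, α₁, plus families (y_{t})_{t=2}^{K} and (z_{t})_{t=1}^{K} of nonnegative reals satisfy: (i) α₀ + α₁ + Σ_{t=2}^{K} y_t = aK; (ii) β₀ + Σ_{t=1}^{K} z_t = bK; (iii) α₁ + Σ_{t=2}^{K} t·y_t + Σ_{t=1}^{K} t·z_t ≤ KM. Then ((K−1)/(aK))·α₀ + ((K−1)/(2aK))·β₀ + ((K−1)/(2aK))·α₁ ≥ (K−1)(2a+b)/(2a) − (K−1)·M/(2a). -/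
theorem Finset.mul_sum_le_sum_mul_of_le {ι R : Type*} [CommSemiring R] [PartialOrder R]
    [IsOrderedRing R] {s : Finset ι} {c : R} {w f : ι → R}
    (hw : ∀ t ∈ s, c ≤ w t) (hf : ∀ t ∈ s, 0 ≤ f t) :
    c * ∑ t ∈ s, f t ≤ ∑ t ∈ s, w t * f t := by
  rw [Finset.mul_sum]
  exact Finset.sum_le_sum fun t ht => mul_le_mul_of_nonneg_right (hw t ht) (hf t ht)

theorem Finset.mul_sum_Icc_le_sum_Icc_cast_mul (m n : ℕ) {f : ℕ → ℝ}
    (hf : ∀ t ∈ Finset.Icc m n, 0 ≤ f t) :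
    (m : ℝ) * ∑ t ∈ Finset.Icc m n, f t ≤ ∑ t ∈ Finset.Icc m n, (t : ℝ) * f t :=
  Finset.mul_sum_le_sum_mul_of_le
    (fun t ht => by exact_mod_cast (Finset.mem_Icc.mp ht).1) hf

theorem stmt_13_general (K : ℕ) (hK : 2 ≤ K) (a b M α₀ β₀ α₁ : ℝ)
    (ha : 0 < a)
    (y z : ℕ → ℝ)
    (hy : ∀ t ∈ Finset.Icc 2 K, 0 ≤ y t)
    (hz : ∀ t ∈ Finset.Icc 1 K, 0 ≤ z t)
    (h1 : α₀ + α₁ + ∑ t ∈ Finset.Icc 2 K, y t = a * K)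
    (h2 : β₀ + ∑ t ∈ Finset.Icc 1 K, z t = b * K)
    (h3 : α₁ + ∑ t ∈ Finset.Icc 2 K, (t : ℝ) * y t + ∑ t ∈ Finset.Icc 1 K, (t : ℝ) * z t
            ≤ K * M) :
    (((K : ℝ) - 1) / (a * K)) * α₀ + (((K : ℝ) - 1) / (2 * a * K)) * β₀
        + (((K : ℝ) - 1) / (2 * a * K)) * α₁
      ≥ ((K : ℝ) - 1) * (2 * a + b) / (2 * a) - ((K : ℝ) - 1) * M / (2 * a) := by
  have hK' : (2 : ℝ) ≤ K := by exact_mod_cast hK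
  have hY := Finset.mul_sum_Icc_le_sum_Icc_cast_mul 2 K hy
  have hZ := Finset.mul_sum_Icc_le_sum_Icc_cast_mul 1 K hz
  push_cast at hY hZ
  -- `2·(i) + (ii) − (iii)`, after bounding `t ≥ 2` on the `y`-sum and `t ≥ 1` on the `z`-sum
  have key : K * (2 * a + b - M) ≤ 2 * α₀ + β₀ + α₁ := by linarith
  have hscale : 0 ≤ ((K : ℝ) - 1) / (2 * a * K) := by
    apply div_nonneg <;> [linarith; positivity]
  calc ((K : ℝ) - 1) * (2 * a + b) / (2 * a) - ((K : ℝ) - 1) * M / (2 * a)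
      = ((K : ℝ) - 1) / (2 * a * K) * (K * (2 * a + b - M)) := by
        field_simp
    _ ≤ ((K : ℝ) - 1) / (2 * a * K) * (2 * α₀ + β₀ + α₁) :=
        mul_le_mul_of_nonneg_left key hscale
    _ = _ := by ring

/-- Linear-programming step of the converse proof (large-memory regime): from the two
file-size constraints and the memory-size constraint on the aggregated subfile masses,
deduce the lower bound on the weighted combination of `α₀, β₀, α₁`. -/
theorem stmt_13 (K : ℕ) (hK : 2 ≤ K) (a b M α₀ β₀ α₁ : ℝ)
    (ha : 0 < a) (hb : 0 ≤ b) (hM : 0 ≤ M)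
    (hα₀ : 0 ≤ α₀) (hβ₀ : 0 ≤ β₀) (hα₁ : 0 ≤ α₁)
    (y z : ℕ → ℝ)
    (hy : ∀ t ∈ Finset.Icc 2 K, 0 ≤ y t)
    (hz : ∀ t ∈ Finset.Icc 1 K, 0 ≤ z t)
    (h1 : α₀ + α₁ + ∑ t ∈ Finset.Icc 2 K, y t = a * K)
    (h2 : β₀ + ∑ t ∈ Finset.Icc 1 K, z t = b * K)
    (h3 : α₁ + ∑ t ∈ Finset.Icc 2 K, (t : ℝ) * y t + ∑ t ∈ Finset.Icc 1 K, (t : ℝ) * z t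
            ≤ K * M) :
    (((K : ℝ) - 1) / (a * K)) * α₀ + (((K : ℝ) - 1) / (2 * a * K)) * β₀
        + (((K : ℝ) - 1) / (2 * a * K)) * α₁
      ≥ ((K : ℝ) - 1) * (2 * a + b) / (2 * a) - ((K : ℝ) - 1) * M / (2 * a) :=
  stmt_13_general K hK a b M α₀ β₀ α₁ ha y z hy hz h1 h2 h3
end

section
/- Let K ≥ 2, a > 0, b ≥ 0, M ≥ 0 be reals with b(K−1) < 2a, and let α₀, β₀, α₁, (y_t)_{t=2}^{K}, (z_t)_{t=1}^{K} be nonnegative reals satisfying α₀ + α₁ + Σ_{t=2}^{K} y_t = aK, β₀ + Σ_{t=1}^{K} z_t = bK, and α₁ + Σ_{t=2}^{K} t·y_t + Σ_{t=1}^{K} t·z_t ≤ KM. Then ((2aK + b(K−1))/(2(a+b)aK))·α₀ + ((K+1)/(2(a+b)K))·β₀ + ((K−1)/(2aK))·α₁ ≥ K − (K+1)·M/(2(a+b)). -/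
/-!
The bound is weak LP duality. Weight the first file-size constraint by `2aK + b(K−1)`,
the second and the memory constraint by `a(K+1)`, and divide by `2(a+b)aK`. In the
combination, `y_t` gets coefficient `(t−2)aK + ta − b(K−1)` and `z_t` gets
`a(K+1)(t−1)`; both are nonnegative because `t ≥ 2` (resp. `t ≥ 1`) and `b(K−1) < 2a`,
so those terms can be dropped.
-/

lemma mul_sum_le_sum_natCast_mul {s : Finset ℕ} {f : ℕ → ℝ} {c : ℝ}
    (hc : ∀ t ∈ s, c ≤ t) (hf : ∀ t ∈ s, 0 ≤ f t) :
    c * ∑ t ∈ s, f t ≤ ∑ t ∈ s, (t : ℝ) * f t := by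
  rw [Finset.mul_sum]
  exact Finset.sum_le_sum fun t ht => mul_le_mul_of_nonneg_right (hc t ht) (hf t ht)

section SmallMemoryLP

/- `S₁ = ∑ y_t`, `T₁ = ∑ t y_t` over `2 ≤ t ≤ K` and `S₂ = ∑ z_t`, `T₂ = ∑ t z_t` over
`1 ≤ t ≤ K`; the sequences enter only through these aggregates. -/
variable {K a b M α₀ β₀ α₁ S₁ S₂ T₁ T₂ : ℝ}

lemma smallMemory_lp_bound_mul (hK : 0 ≤ K) (ha : 0 ≤ a) (hreg : b * (K - 1) < 2 * a)
    (hS₁ : 0 ≤ S₁) (hT₁ : 2 * S₁ ≤ T₁) (hT₂ : S₂ ≤ T₂)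
    (h1 : α₀ + α₁ + S₁ = a * K) (h2 : β₀ + S₂ = b * K) (h3 : α₁ + T₁ + T₂ ≤ K * M) :
    2 * (a + b) * a * K * K - a * K * (K + 1) * M
      ≤ (2 * a * K + b * (K - 1)) * α₀ + a * (K + 1) * β₀ + (a + b) * (K - 1) * α₁ := by
  have hw : 0 ≤ a * (K + 1) := by positivity
  linear_combination (2 * a * K + b * (K - 1)) * h1.symm + a * (K + 1) * h2.symm
    + mul_le_mul_of_nonneg_left h3 hw + mul_le_mul_of_nonneg_left hT₁ hw
    + mul_le_mul_of_nonneg_left hT₂ hw + mul_nonneg (sub_nonneg.2 hreg.le) hS₁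

lemma smallMemory_lp_bound (hK : 0 < K) (ha : 0 < a) (hb : 0 ≤ b)
    (hreg : b * (K - 1) < 2 * a) (hS₁ : 0 ≤ S₁) (hT₁ : 2 * S₁ ≤ T₁) (hT₂ : S₂ ≤ T₂)
    (h1 : α₀ + α₁ + S₁ = a * K) (h2 : β₀ + S₂ = b * K) (h3 : α₁ + T₁ + T₂ ≤ K * M) :
    ((2 * a * K + b * (K - 1)) / (2 * (a + b) * a * K)) * α₀
        + ((K + 1) / (2 * (a + b) * K)) * β₀
        + ((K - 1) / (2 * a * K)) * α₁
      ≥ K - (K + 1) * M / (2 * (a + b)) := by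
  have hab : 0 < a + b := by linarith
  have key := smallMemory_lp_bound_mul hK.le ha.le hreg hS₁ hT₁ hT₂ h1 h2 h3
  rw [ge_iff_le]
  field_simp
  linarith

end SmallMemoryLP

theorem stmt_14_general (K : ℕ) (hK : 2 ≤ K) (a b M α₀ β₀ α₁ : ℝ)
    (ha : 0 < a) (hb : 0 ≤ b)
    (hreg : b * ((K : ℝ) - 1) < 2 * a)
    (y z : ℕ → ℝ)
    (hy : ∀ t ∈ Finset.Icc 2 K, 0 ≤ y t)
    (hz : ∀ t ∈ Finset.Icc 1 K, 0 ≤ z t)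
    (h1 : α₀ + α₁ + ∑ t ∈ Finset.Icc 2 K, y t = a * K)
    (h2 : β₀ + ∑ t ∈ Finset.Icc 1 K, z t = b * K)
    (h3 : α₁ + ∑ t ∈ Finset.Icc 2 K, (t : ℝ) * y t + ∑ t ∈ Finset.Icc 1 K, (t : ℝ) * z t
            ≤ K * M) :
    ((2 * a * K + b * ((K : ℝ) - 1)) / (2 * (a + b) * a * K)) * α₀
        + (((K : ℝ) + 1) / (2 * (a + b) * K)) * β₀
        + (((K : ℝ) - 1) / (2 * a * K)) * α₁
      ≥ (K : ℝ) - ((K : ℝ) + 1) * M / (2 * (a + b)) := by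
  have hKpos : (0 : ℝ) < K := by exact_mod_cast (by omega : 0 < K)
  have hT₁ := mul_sum_le_sum_natCast_mul (c := 2)
    (fun t ht => by exact_mod_cast (Finset.mem_Icc.mp ht).1) hy
  have hT₂ := mul_sum_le_sum_natCast_mul (c := 1)
    (fun t ht => by exact_mod_cast (Finset.mem_Icc.mp ht).1) hz
  rw [one_mul] at hT₂
  exact smallMemory_lp_bound hKpos ha hb hreg (Finset.sum_nonneg hy) hT₁ hT₂ h1 h2 h3

/-- Linear-programming step of the converse proof (small-memory regime,
`b(K−1) < 2a`): lower bound on the weighted combination of `α₀, β₀, α₁`. -/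
theorem stmt_14 (K : ℕ) (hK : 2 ≤ K) (a b M α₀ β₀ α₁ : ℝ)
    (ha : 0 < a) (hb : 0 ≤ b) (hM : 0 ≤ M)
    (hreg : b * ((K : ℝ) - 1) < 2 * a)
    (hα₀ : 0 ≤ α₀) (hβ₀ : 0 ≤ β₀) (hα₁ : 0 ≤ α₁)
    (y z : ℕ → ℝ)
    (hy : ∀ t ∈ Finset.Icc 2 K, 0 ≤ y t)
    (hz : ∀ t ∈ Finset.Icc 1 K, 0 ≤ z t)
    (h1 : α₀ + α₁ + ∑ t ∈ Finset.Icc 2 K, y t = a * K)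
    (h2 : β₀ + ∑ t ∈ Finset.Icc 1 K, z t = b * K)
    (h3 : α₁ + ∑ t ∈ Finset.Icc 2 K, (t : ℝ) * y t + ∑ t ∈ Finset.Icc 1 K, (t : ℝ) * z t
            ≤ K * M) :
    ((2 * a * K + b * ((K : ℝ) - 1)) / (2 * (a + b) * a * K)) * α₀
        + (((K : ℝ) + 1) / (2 * (a + b) * K)) * β₀
        + (((K : ℝ) - 1) / (2 * a * K)) * α₁
      ≥ (K : ℝ) - ((K : ℝ) + 1) * M / (2 * (a + b)) :=
  stmt_14_general K hK a b M α₀ β₀ α₁ ha hb hreg y z hy hz h1 h2 h3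
end
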